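/- Let u, V : ℝ → ℂ be 2π-periodic continuously differentiable functions with V real-valued, and let t ∈ ℝ. Then ‖e^{itV}u‖_{H¹} ≥ |t|·‖V'·u‖_{L²} − ‖u‖_{H¹}. In particular, if ‖V'·u‖_{L²} ≠ 0, then ‖e^{itV}u‖_{H¹} → +∞ as t → +∞. -/

import Mathlib

/-! Write `e = e^{itV}`. Since `V` is real, `|e| = 1`, and the product rule gives
`(e u)' = e · (i t V' u + u')`. Hence `|t| ‖V' u‖ = ‖(e u)' - e u'‖ ≤ ‖(e u)'‖ + ‖u'‖` by
Minkowski's inequality, and each term on the right is bounded by the corresponding `H¹` norm. -/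

open MeasureTheory Real Filter

/-- The `L²` norm of a `2π`-periodic function:
`‖u‖_{L²} = ((1/2π) ∫₀^{2π} |u(x)|² dx)^{1/2}`. -/
noncomputable def L2norm (u : ℝ → ℂ) : ℝ :=
  Real.sqrt ((1 / (2 * Real.pi)) * ∫ x in (0:ℝ)..(2 * Real.pi), ‖u x‖ ^ 2)

/-- The `H¹` norm of a `2π`-periodic continuously differentiable function:
`‖u‖_{H¹} = (‖u‖_{L²}² + ‖u'‖_{L²}²)^{1/2}`. -/
noncomputable def H1norm (u : ℝ → ℂ) : ℝ :=
  Real.sqrt (L2norm u ^ 2 + L2norm (deriv u) ^ 2)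

theorem Continuous.memLp_restrict_Ioc {E : Type*} [NormedAddCommGroup E] {f : ℝ → E}
    (hf : Continuous f) (p : ENNReal) (a b : ℝ) : MemLp f p (volume.restrict (Set.Ioc a b)) := by
  obtain ⟨C, hC⟩ :=
    (isCompact_Icc (a := a) (b := b)).exists_bound_of_continuousOn hf.continuousOn
  refine .of_bound hf.aestronglyMeasurable C ((ae_restrict_iff' measurableSet_Ioc).2 ?_)
  exact ae_of_all _ fun x hx => hC x (Set.Ioc_subset_Icc_self hx)

theorem L2norm_eq_sqrt_mul_eLpNorm {f : ℝ → ℂ}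
    (hf : MemLp f 2 (volume.restrict (Set.Ioc 0 (2 * π)))) :
    L2norm f = √(1 / (2 * π)) * (eLpNorm f 2 (volume.restrict (Set.Ioc 0 (2 * π)))).toReal := by
  rw [L2norm, intervalIntegral.integral_of_le two_pi_pos.le, sqrt_mul (by positivity),
    hf.eLpNorm_eq_integral_rpow_norm two_ne_zero ENNReal.ofNat_ne_top,
    ENNReal.toReal_ofReal (by positivity)]
  congr 1
  rw [sqrt_eq_rpow]
  norm_num

theorem L2norm_add_le {f g : ℝ → ℂ} (hf : MemLp f 2 (volume.restrict (Set.Ioc 0 (2 * π))))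
    (hg : MemLp g 2 (volume.restrict (Set.Ioc 0 (2 * π)))) :
    L2norm (f + g) ≤ L2norm f + L2norm g := by
  rw [L2norm_eq_sqrt_mul_eLpNorm hf, L2norm_eq_sqrt_mul_eLpNorm hg,
    L2norm_eq_sqrt_mul_eLpNorm (hf.add hg), ← mul_add, ← Lp.norm_toLp _ hf, ← Lp.norm_toLp _ hg,
    ← Lp.norm_toLp _ (hf.add hg), hf.toLp_add hg]
  gcongr
  exact norm_add_le _ _

theorem L2norm_congr {f g : ℝ → ℂ} (h : ∀ x, ‖f x‖ = ‖g x‖) : L2norm f = L2norm g := by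
  simp only [L2norm, h]

theorem L2norm_const_mul (c : ℂ) (f : ℝ → ℂ) :
    L2norm (fun x => c * f x) = ‖c‖ * L2norm f := by
  simp only [L2norm, norm_mul, mul_pow, intervalIntegral.integral_const_mul]
  rw [mul_left_comm, sqrt_mul (by positivity), sqrt_sq (norm_nonneg c)]

theorem L2norm_nonneg (f : ℝ → ℂ) : 0 ≤ L2norm f := sqrt_nonneg _

theorem L2norm_deriv_le_H1norm (f : ℝ → ℂ) : L2norm (deriv f) ≤ H1norm f :=
  le_sqrt_of_sq_le (le_add_of_nonneg_left (sq_nonneg _))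

open Complex in
theorem deriv_cexp_I_mul_mul {u V : ℝ → ℂ} (hu : Differentiable ℝ u) (hV : Differentiable ℝ V)
    (t : ℝ) : deriv (fun x => exp (I * t * V x) * u x) =
      fun x => exp (I * t * V x) * (I * t * deriv V x * u x + deriv u x) := by
  funext x
  have hphase : HasDerivAt (fun y => exp (I * t * V y))
      (exp (I * t * V x) * (I * t * deriv V x)) x :=
    ((hV x).hasDerivAt.const_mul _).cexp
  refine (hphase.mul (hu x).hasDerivAt).deriv.trans ?_
  ring

open Complex in
theorem abs_mul_L2norm_le_L2norm_deriv_cexp_I_mul_add {u V : ℝ → ℂ} (hu : ContDiff ℝ 1 u)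
    (hV : ContDiff ℝ 1 V) (hV_real : ∀ x, (V x).im = 0) (t : ℝ) :
    |t| * L2norm (fun x => deriv V x * u x) ≤
      L2norm (deriv fun x => exp (I * t * V x) * u x) + L2norm (deriv u) := by
  have hphase_norm : ∀ x, ‖exp (I * t * V x)‖ = 1 := fun x => by
    simp [norm_exp, hV_real]
  have hderiv := deriv_cexp_I_mul_mul (hu.differentiable one_ne_zero)
    (hV.differentiable one_ne_zero) t
  have hu' := hu.continuous_deriv le_rfl
  have hV' := hV.continuous_deriv le_rfl
  calc |t| * L2norm (fun x => deriv V x * u x)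
      = L2norm (fun x => exp (I * t * V x) * (I * t * deriv V x * u x)) := by
        rw [L2norm_congr (f := fun x => exp (I * t * V x) * (I * t * deriv V x * u x))
          (g := fun x => I * t * (deriv V x * u x)) fun x => by
          rw [norm_mul, hphase_norm, one_mul, mul_assoc], L2norm_const_mul, norm_mul, norm_I,
          one_mul, norm_real, norm_eq_abs]
    _ = L2norm ((deriv fun x => exp (I * t * V x) * u x) +
          fun x => -(exp (I * t * V x) * deriv u x)) := by
        rw [hderiv]; congr 1; funext x; simp only [Pi.add_apply]; ring
    _ ≤ L2norm (deriv fun x => exp (I * t * V x) * u x) +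
          L2norm (fun x => -(exp (I * t * V x) * deriv u x)) := by
        refine L2norm_add_le (Continuous.memLp_restrict_Ioc ?_ _ _ _)
          (Continuous.memLp_restrict_Ioc (by fun_prop) _ _ _)
        rw [hderiv]
        fun_prop
    _ = L2norm (deriv fun x => exp (I * t * V x) * u x) + L2norm (deriv u) := by
        congr 1
        exact L2norm_congr fun x => by rw [norm_neg, norm_mul, hphase_norm, one_mul]

theorem stmt0_general (u V : ℝ → ℂ)
    (hu : ContDiff ℝ 1 u) (hV : ContDiff ℝ 1 V)
    (hV_real : ∀ x, (V x).im = 0) :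
    (∀ t : ℝ,
      H1norm (fun x => Complex.exp (Complex.I * t * V x) * u x) ≥
        |t| * L2norm (fun x => deriv V x * u x) - H1norm u) ∧
    (L2norm (fun x => deriv V x * u x) ≠ 0 →
      Filter.Tendsto (fun t : ℝ => H1norm (fun x => Complex.exp (Complex.I * t * V x) * u x))
        Filter.atTop Filter.atTop) := by
  have hlower : ∀ t : ℝ, H1norm (fun x => Complex.exp (Complex.I * t * V x) * u x) ≥
      |t| * L2norm (fun x => deriv V x * u x) - H1norm u := fun t => by
    linarith [abs_mul_L2norm_le_L2norm_deriv_cexp_I_mul_add hu hV hV_real t,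
      L2norm_deriv_le_H1norm (fun x => Complex.exp (Complex.I * t * V x) * u x),
      L2norm_deriv_le_H1norm u]
  refine ⟨hlower, fun hne => ?_⟩
  have hpos : 0 < L2norm (fun x => deriv V x * u x) := (L2norm_nonneg _).lt_of_ne' hne
  refine tendsto_atTop_mono' _ ?_
    ((tendsto_id.atTop_mul_const hpos).atTop_add (tendsto_const_nhds (x := -H1norm u)))
  filter_upwards [eventually_ge_atTop 0] with t ht
  have := hlower t
  rw [abs_of_nonneg ht] at this
  simp only [id]
  linarith

/-- For `u, V : ℝ → ℂ` `2π`-periodic `C¹` functions with `V` real-valued,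
and any `t ∈ ℝ`, one has `‖e^{itV}u‖_{H¹} ≥ |t|·‖V'·u‖_{L²} − ‖u‖_{H¹}`; in particular, if
`‖V'·u‖_{L²} ≠ 0`, then `‖e^{itV}u‖_{H¹} → +∞` as `t → +∞`. -/
theorem stmt0 (u V : ℝ → ℂ)
    (hu_per : ∀ x, u (x + 2 * Real.pi) = u x)
    (hV_per : ∀ x, V (x + 2 * Real.pi) = V x)
    (hu : ContDiff ℝ 1 u) (hV : ContDiff ℝ 1 V)
    (hV_real : ∀ x, (V x).im = 0) :
    (∀ t : ℝ,
      H1norm (fun x => Complex.exp (Complex.I * t * V x) * u x) ≥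
        |t| * L2norm (fun x => deriv V x * u x) - H1norm u) ∧
    (L2norm (fun x => deriv V x * u x) ≠ 0 →
      Filter.Tendsto (fun t : ℝ => H1norm (fun x => Complex.exp (Complex.I * t * V x) * u x))
        Filter.atTop Filter.atTop) :=
  stmt0_general u V hu hV hV_real
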